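/- In the situation below, assume n_i < ∞ for all i = 1,…,d, and assume that the Janet basis J for ⟨p_1,…,p_d⟩ is the Janet decomposition of an auto-reduced finite set G with ⟨G⟩ = ⟨p_1,…,p_d⟩. For each i = 1,…,d let (b_i,μ_i) ∈ J be the pair with lm(b_i) = φ^{n_i}·κ_i, and set J_top := {(b_1,μ_1),…,(b_d,μ_d)} and J_low := J ∖ J_top. Then: (1) μ_i = {φ,ρ} for all i = 1,…,d; (2) for every i = 1,…,d and every j with m_i ≤ j < n_i, there exist a unique l > 0 and a unique (b,μ) ∈ J_low such that lm(b) = φ^j ρ^l·κ_i, and for these pairs one has μ = {ρ}; (3) J_low consists exactly of the pairs described in (2). -/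
import Mathlib


/-!
Common setup: the skew polynomial ring `D = K{φ,ρ}` (with commuting endomorphisms
`γφ, γρ : K → K`, `φ·x = γφ(x)·φ`, `ρ·x = γρ(x)·ρ`), the free left `D`-module
`𝓕 = ⊕_{i=1}^d D κ_i`, its monomials `φ^k ρ^j κ_i`, the monomial order, cones,
Janet bases, and the data attached to a `D`-module `M` that is free over `K⟨φ⟩`.

`𝓕` is realized concretely as finitely supported coefficient functions on the
set of monomial indices `(i, k, j) ↔ φ^k ρ^j κ_i`; multiplication by `φ` resp. `ρ`
is the K-semilinear shift operator `PhiMul` resp. `RhoMul`.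
-/

namespace JanetSetup

/-- Index of a monomial `φ^k ρ^j κ_i` of `𝓕`: the triple `(i, k, j)`. -/
abbrev MonIx (d : ℕ) := Fin d × ℕ × ℕ

/-- The free module `𝓕 = ⊕_{i=1}^d D κ_i`, as coefficient functions on monomials. -/
abbrev Fr (K : Type) [Field K] (d : ℕ) : Type := MonIx d →₀ K

variable {K : Type} [Field K] {d : ℕ}

/-- Left multiplication by the variable `φ` on `𝓕`. -/
noncomputable def PhiMul (γφ : K →+* K) (f : Fr K d) : Fr K d :=
  Finsupp.mapDomain (fun m => (m.1, m.2.1 + 1, m.2.2))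
    (Finsupp.mapRange (fun x => γφ x) (map_zero γφ) f)

/-- Left multiplication by the variable `ρ` on `𝓕`. -/
noncomputable def RhoMul (γρ : K →+* K) (f : Fr K d) : Fr K d :=
  Finsupp.mapDomain (fun m => (m.1, m.2.1, m.2.2 + 1))
    (Finsupp.mapRange (fun x => γρ x) (map_zero γρ) f)

/-- The left `D`-submodule of `𝓕` generated by a set `s` (as a `K`-subspace:
the `K`-span of all `φ^k ρ^j g`, `g ∈ s`). -/
noncomputable def DSpan (γφ γρ : K →+* K) (s : Set (Fr K d)) : Submodule K (Fr K d) :=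
  Submodule.span K
    {x | ∃ (k j : ℕ) (g : Fr K d), g ∈ s ∧ x = (PhiMul γφ)^[k] ((RhoMul γρ)^[j] g)}

/-- The monomial order: lexicographic with `ρ ≺ φ`, position-over-term with
`κ_{i₁} ≻ κ_{i₂}` for `i₁ < i₂`. -/
def MLt (a b : MonIx d) : Prop :=
  b.1 < a.1 ∨ (a.1 = b.1 ∧ (a.2.1 < b.2.1 ∨ (a.2.1 = b.2.1 ∧ a.2.2 < b.2.2)))

/-- `m` is the leading monomial of `f`. -/
def IsLm (f : Fr K d) (m : MonIx d) : Prop :=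
  m ∈ f.support ∧ ∀ m' ∈ f.support, m' ≠ m → MLt m' m

/-- The `μ`-cone of a monomial `m`; `μ = (φ ∈ μ, ρ ∈ μ)` as a pair of Booleans. -/
def Cone (μ : Bool × Bool) (m : MonIx d) : Set (MonIx d) :=
  {x | ∃ a b : ℕ, (μ.1 = true ∨ a = 0) ∧ (μ.2 = true ∨ b = 0) ∧
      x = (m.1, m.2.1 + a, m.2.2 + b)}

/-- A Janet basis `{(b_1,μ_1),…,(b_r,μ_r)}` for the submodule `N ⊆ 𝓕`:
the `b_i` generate `N` as a left `D`-module and the set of leading monomials of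
nonzero elements of `N` is the disjoint union of the cones `Mon(μ_i)·lm(b_i)`. -/
structure JanetBasis (γφ γρ : K →+* K) (d : ℕ) (N : Submodule K (Fr K d)) where
  r : ℕ
  b : Fin r → Fr K d
  μ : Fin r → Bool × Bool
  /-- the leading monomial of `b i` -/
  lmb : Fin r → MonIx d
  b_ne : ∀ i, b i ≠ 0
  b_lm : ∀ i, IsLm (b i) (lmb i)
  pair_inj : Function.Injective fun i => (b i, μ i)
  span_eq : DSpan γφ γρ (Set.range b) = N
  lm_cover : ∀ f ∈ N, f ≠ 0 → ∀ m, IsLm f m → ∃ i, m ∈ Cone (μ i) (lmb i)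
  cone_lm : ∀ i, ∀ m ∈ Cone (μ i) (lmb i), ∃ f ∈ N, f ≠ 0 ∧ IsLm f m
  disj : ∀ i i' m, m ∈ Cone (μ i) (lmb i) → m ∈ Cone (μ i') (lmb i') → i = i'

variable (γφ γρ : K →+* K)

/-- `f` is reduced (in normal form) w.r.t. the pairs of `J` indexed by `P`:
no monomial of `f` lies in one of the corresponding cones. -/
def IsReduced {N : Submodule K (Fr K d)} (J : JanetBasis γφ γρ d N)
    (P : Set (Fin J.r)) (f : Fr K d) : Prop :=
  ∀ m ∈ f.support, ∀ i ∈ P, m ∉ Cone (J.μ i) (J.lmb i)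

/-- `h` is the normal form `NF(g, ·)` of `g` with respect to the pairs of `J`
indexed by `P`: the reduction process subtracts left multiples of the `b i`
(`i ∈ P`), so `g - h` lies in the `D`-span of these, and the result is reduced. -/
def IsNFOf {N : Submodule K (Fr K d)} (J : JanetBasis γφ γρ d N)
    (P : Set (Fin J.r)) (g h : Fr K d) : Prop :=
  g - h ∈ DSpan γφ γρ (J.b '' P) ∧ IsReduced γφ γρ J P h

/-- The projection `pr : 𝓕 → M`, `φ^k ρ^j κ_i ↦ F^k S^j κ̄_i`, for a `D`-module `M`
with `φ`-action `F`, `ρ`-action `S` and distinguished elements `κb i = κ̄_i`. -/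
noncomputable def pr {M : Type} [AddCommGroup M] [Module K M]
    (F S : M →+ M) (κb : Fin d → M) (f : Fr K d) : M :=
  f.sum fun m x => x • F^[m.2.1] (S^[m.2.2] (κb m.1))

/-- The relation `p_i = ρ κ_i − Σ_j D_{ij} κ_j ∈ 𝓕`, where the entry `D_{ij} ∈ K⟨φ⟩`
is recorded as the finitely supported coefficient function of its powers of `φ`. -/
noncomputable def pelt (Dmat : Fin d → Fin d → (ℕ →₀ K)) (i : Fin d) : Fr K d :=
  Finsupp.single (i, 0, 1) (1 : K)
    - ∑ j : Fin d, (Dmat i j).sum fun k x => Finsupp.single (j, k, 0) x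

/-- `n_i = inf{n | ∃ (b,μ) ∈ J, lm(b) = φ^n κ_i} ∈ ℕ∪{∞}`. -/
noncomputable def nVal {N : Submodule K (Fr K d)} (J : JanetBasis γφ γρ d N)
    (i : Fin d) : ℕ∞ :=
  sInf {c : ℕ∞ | ∃ n : ℕ, c = n ∧ ∃ ix, J.lmb ix = (i, n, 0)}

/-- `m_i = inf{n | ∃ (b,μ) ∈ J, ∃ l ≥ 0, lm(b) = φ^n ρ^l κ_i} ∈ ℕ∪{∞}`. -/
noncomputable def mVal {N : Submodule K (Fr K d)} (J : JanetBasis γφ γρ d N)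
    (i : Fin d) : ℕ∞ :=
  sInf {c : ℕ∞ | ∃ n : ℕ, c = n ∧ ∃ ix l, J.lmb ix = (i, n, l)}

/-- `W_gen = {φ^j κ_i | 1 ≤ i ≤ d, 0 ≤ j < n_i} ⊆ 𝓕`. -/
def Wgen {N : Submodule K (Fr K d)} (J : JanetBasis γφ γρ d N) : Set (Fr K d) :=
  {w | ∃ (i : Fin d) (j : ℕ), (j : ℕ∞) < nVal γφ γρ J i ∧
      w = Finsupp.single (i, j, 0) (1 : K)}

/-- `W_ind = {φ^j κ_i | 1 ≤ i ≤ d, 0 ≤ j < m_i} ⊆ 𝓕`. -/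
def Wind {N : Submodule K (Fr K d)} (J : JanetBasis γφ γρ d N) : Set (Fr K d) :=
  {w | ∃ (i : Fin d) (j : ℕ), (j : ℕ∞) < mVal γφ γρ J i ∧
      w = Finsupp.single (i, j, 0) (1 : K)}

end JanetSetup

namespace JanetSetup

variable {K : Type} [Field K] {d : ℕ}

/-- `G` (a finite subset of `𝓕 ∖ {0}`, recorded with its leading monomials `lmg`)
is auto-reduced: no monomial of a `g ∈ G` lies in the full cone
`Mon({φ,ρ})·lm(g')` of another `g' ∈ G`. -/
def AutoReduced {s : ℕ} (G : Fin s → Fr K d) (lmg : Fin s → MonIx d) : Prop :=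
  (∀ a, G a ≠ 0 ∧ IsLm (G a) (lmg a)) ∧ Function.Injective G ∧
    ∀ a, ∀ m ∈ (G a).support, ∀ a', a' ≠ a → m ∉ Cone (true, true) (lmg a')

/-- (For `G` ordered by descending leading monomials:) `a` is the first index of
`G` whose leading monomial is a multiple of its `κ`-index. -/
def IsFirst {s : ℕ} (lmg : Fin s → MonIx d) (a : Fin s) : Prop :=
  ∀ a' : Fin s, a' < a → (lmg a').1 ≠ (lmg a).1

/-- The set of pairs produced by the Janet decomposition of the (descendingly
ordered, auto-reduced) family `G`: the first element for each `κ`-index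
contributes `(g_j, {φ,ρ})`; every other `g_j` contributes the pairs
`(φ^k g_j, {ρ})` for `0 ≤ k < deg_φ(lm g_{j-1}) − deg_φ(lm g_j)`. -/
def JanetDecompPairs (γφ : K →+* K) {s : ℕ} (G : Fin s → Fr K d)
    (lmg : Fin s → MonIx d) : Set (Fr K d × (Bool × Bool)) :=
  {q | ∃ a : Fin s, IsFirst lmg a ∧ q = (G a, (true, true))} ∪
  {q | ∃ (a a' : Fin s) (k : ℕ), ¬ IsFirst lmg a ∧ (a' : ℕ) + 1 = (a : ℕ) ∧
      k + (lmg a).2.1 < (lmg a').2.1 ∧ q = ((PhiMul γφ)^[k] (G a), (false, true))}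

/-- `J` is the Janet decomposition of the auto-reduced family `G`
(ordered descendingly by leading monomials). -/
def IsJanetDecompOf (γφ γρ : K →+* K) {N : Submodule K (Fr K d)}
    (J : JanetBasis γφ γρ d N) {s : ℕ} (G : Fin s → Fr K d)
    (lmg : Fin s → MonIx d) : Prop :=
  AutoReduced G lmg ∧ (∀ a b : Fin s, a < b → MLt (lmg b) (lmg a)) ∧
    {q : Fr K d × (Bool × Bool) | ∃ i, q = (J.b i, J.μ i)} = JanetDecompPairs γφ G lmg

end JanetSetup


namespace JanetSetup

variable {K : Type} [Field K] {d : ℕ}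

lemma triple_eq {p : MonIx d} {i : Fin d} {c e : ℕ}
    (h1 : p.1 = i) (h2 : p.2.1 = c) (h3 : p.2.2 = e) : p = (i, c, e) := by
  obtain ⟨a, b, c'⟩ := p; simp_all

lemma MLt_asymm {a b : MonIx d} (h1 : MLt a b) (h2 : MLt b a) : False := by
  obtain ⟨a1, a2, a3⟩ := a; obtain ⟨b1, b2, b3⟩ := b
  simp only [MLt] at h1 h2
  rcases h1 with h | ⟨e, h⟩ <;> rcases h2 with h' | ⟨e', h'⟩
  · exact absurd (h.trans h') (lt_irrefl _)
  · simp_all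
  · simp_all
  · omega

lemma IsLm_unique {f : Fr K d} {m m' : MonIx d} (h : IsLm f m) (h' : IsLm f m') :
    m = m' := by
  by_contra hne
  exact MLt_asymm (h'.2 m h.1 hne) (h.2 m' h'.1 (Ne.symm hne))

lemma IsLm.ne_zero {f : Fr K d} {m : MonIx d} (h : IsLm f m) : f ≠ 0 := by
  intro h0; have := h.1; rw [h0] at this; simp at this

lemma PhiMul_apply_succ (γφ : K →+* K) (f : Fr K d) (i : Fin d) (k j : ℕ) :
    PhiMul γφ f (i, k + 1, j) = γφ (f (i, k, j)) := by
  have hinj : Function.Injective (fun m : MonIx d => (m.1, m.2.1 + 1, m.2.2)) := by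
    intro ⟨a1,a2,a3⟩ ⟨b1,b2,b3⟩ h; simp_all
  have := Finsupp.mapDomain_apply hinj
      (Finsupp.mapRange (fun x => γφ x) (map_zero γφ) f) (i, k, j)
  simpa [PhiMul, Finsupp.mapRange_apply] using this

lemma PhiMul_apply_zero (γφ : K →+* K) (f : Fr K d) (i : Fin d) (j : ℕ) :
    PhiMul γφ f (i, 0, j) = 0 := by
  apply Finsupp.mapDomain_notin_range
  rintro ⟨⟨a1,a2,a3⟩, h⟩; simp at h

lemma RhoMul_apply_succ (γρ : K →+* K) (f : Fr K d) (i : Fin d) (k j : ℕ) :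
    RhoMul γρ f (i, k, j + 1) = γρ (f (i, k, j)) := by
  have hinj : Function.Injective (fun m : MonIx d => (m.1, m.2.1, m.2.2 + 1)) := by
    intro ⟨a1,a2,a3⟩ ⟨b1,b2,b3⟩ h; simp_all
  have := Finsupp.mapDomain_apply hinj
      (Finsupp.mapRange (fun x => γρ x) (map_zero γρ) f) (i, k, j)
  simpa [RhoMul, Finsupp.mapRange_apply] using this

lemma RhoMul_apply_zero (γρ : K →+* K) (f : Fr K d) (i : Fin d) (k : ℕ) :
    RhoMul γρ f (i, k, 0) = 0 := by
  apply Finsupp.mapDomain_notin_range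
  rintro ⟨⟨a1,a2,a3⟩, h⟩; simp at h

lemma mem_support_PhiMul {γφ : K →+* K} {f : Fr K d} {p : MonIx d} :
    p ∈ (PhiMul γφ f).support ↔ ∃ q ∈ f.support, p = (q.1, q.2.1 + 1, q.2.2) := by
  obtain ⟨i, k, j⟩ := p
  cases k with
  | zero =>
    simp only [Finsupp.mem_support_iff, PhiMul_apply_zero, ne_eq, not_true_eq_false,
      false_iff]
    rintro ⟨⟨q1,q2,q3⟩, _, h⟩; simp at h
  | succ k =>
    simp only [Finsupp.mem_support_iff, PhiMul_apply_succ]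
    constructor
    · intro h
      refine ⟨(i, k, j), fun h0 => h (by rw [h0, map_zero]), rfl⟩
    · rintro ⟨⟨q1,q2,q3⟩, hq, h⟩
      simp only [Prod.mk.injEq] at h
      obtain ⟨rfl, h2, rfl⟩ := h
      have : q2 = k := by omega
      subst this
      intro h0
      exact hq (γφ.injective (by simpa using h0))

lemma mem_support_RhoMul {γρ : K →+* K} {f : Fr K d} {p : MonIx d} :
    p ∈ (RhoMul γρ f).support ↔ ∃ q ∈ f.support, p = (q.1, q.2.1, q.2.2 + 1) := by
  obtain ⟨i, k, j⟩ := p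
  cases j with
  | zero =>
    simp only [Finsupp.mem_support_iff, RhoMul_apply_zero, ne_eq, not_true_eq_false,
      false_iff]
    rintro ⟨⟨q1,q2,q3⟩, _, h⟩; simp at h
  | succ j =>
    simp only [Finsupp.mem_support_iff, RhoMul_apply_succ]
    constructor
    · intro h
      refine ⟨(i, k, j), fun h0 => h (by rw [h0, map_zero]), rfl⟩
    · rintro ⟨⟨q1,q2,q3⟩, hq, h⟩
      simp only [Prod.mk.injEq] at h
      obtain ⟨rfl, rfl, h3⟩ := h
      have : q3 = j := by omega
      subst this
      intro h0
      exact hq (γρ.injective (by simpa using h0))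

lemma IsLm_PhiMul {γφ : K →+* K} {f : Fr K d} {m : MonIx d} (h : IsLm f m) :
    IsLm (PhiMul γφ f) (m.1, m.2.1 + 1, m.2.2) := by
  constructor
  · exact mem_support_PhiMul.2 ⟨m, h.1, rfl⟩
  · intro p hp hne
    obtain ⟨q, hq, rfl⟩ := mem_support_PhiMul.1 hp
    have hqm : q ≠ m := by rintro rfl; exact hne rfl
    have := h.2 q hq hqm
    simp only [MLt] at this ⊢
    rcases this with h' | ⟨e, h'⟩
    · exact Or.inl h'
    · exact Or.inr ⟨e, by omega⟩

lemma IsLm_RhoMul {γρ : K →+* K} {f : Fr K d} {m : MonIx d} (h : IsLm f m) :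
    IsLm (RhoMul γρ f) (m.1, m.2.1, m.2.2 + 1) := by
  constructor
  · exact mem_support_RhoMul.2 ⟨m, h.1, rfl⟩
  · intro p hp hne
    obtain ⟨q, hq, rfl⟩ := mem_support_RhoMul.1 hp
    have hqm : q ≠ m := by rintro rfl; exact hne rfl
    have := h.2 q hq hqm
    simp only [MLt] at this ⊢
    rcases this with h' | ⟨e, h'⟩
    · exact Or.inl h'
    · exact Or.inr ⟨e, by omega⟩

lemma IsLm_PhiMul_iter {γφ : K →+* K} {f : Fr K d} {m : MonIx d} (k : ℕ)
    (h : IsLm f m) : IsLm ((PhiMul γφ)^[k] f) (m.1, m.2.1 + k, m.2.2) := by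
  induction k with
  | zero => simpa using h
  | succ n ih =>
    rw [Function.iterate_succ_apply']
    exact IsLm_PhiMul ih

lemma IsLm_RhoMul_iter {γρ : K →+* K} {f : Fr K d} {m : MonIx d} (j : ℕ)
    (h : IsLm f m) : IsLm ((RhoMul γρ)^[j] f) (m.1, m.2.1, m.2.2 + j) := by
  induction j with
  | zero => simpa using h
  | succ n ih =>
    rw [Function.iterate_succ_apply']
    exact IsLm_RhoMul ih

lemma IsLm_iterPR {γφ γρ : K →+* K} {f : Fr K d} {m : MonIx d} (k j : ℕ)
    (h : IsLm f m) :
    IsLm ((PhiMul γφ)^[k] ((RhoMul γρ)^[j] f)) (m.1, m.2.1 + k, m.2.2 + j) :=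
  IsLm_PhiMul_iter k (IsLm_RhoMul_iter j h)


lemma nVal_le {γφ γρ : K →+* K} {N : Submodule K (Fr K d)} (J : JanetBasis γφ γρ d N)
    {i : Fin d} {ix : Fin J.r} {c : ℕ} (h : J.lmb ix = (i, c, 0)) :
    nVal γφ γρ J i ≤ (c : ℕ∞) := by
  unfold nVal
  exact sInf_le ⟨c, rfl, ix, h⟩

lemma mVal_le {γφ γρ : K →+* K} {N : Submodule K (Fr K d)} (J : JanetBasis γφ γρ d N)
    {i : Fin d} {ix : Fin J.r} {c l : ℕ} (h : J.lmb ix = (i, c, l)) :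
    mVal γφ γρ J i ≤ (c : ℕ∞) := by
  unfold mVal
  exact sInf_le ⟨c, rfl, ix, l, h⟩

end JanetSetup

open JanetSetup

/-!
STATEMENT 12 (description of a Janet basis obtained from Janet's algorithm):
with `J_top = {(b_i, μ_i) | i = 1,…,d}` (where `lm(b_i) = φ^{n_i} κ_i`) and
`J_low = J ∖ J_top`:
(1) `μ_i = {φ,ρ}` for all `i`;
(2) for all `i` and `m_i ≤ j < n_i` there are a unique `l > 0` and a unique
    `(b,μ) ∈ J_low` with `lm(b) = φ^j ρ^l κ_i`, and for those `μ = {ρ}`;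
(3) `J_low` consists exactly of the pairs in (2).
-/
theorem janet_decomposition_description
    {K : Type} [Field K] {d : ℕ} (γφ γρ : K →+* K)
    (hcomm : ∀ x : K, γφ (γρ x) = γρ (γφ x))
    {M : Type} [AddCommGroup M] [Module K M]
    -- `M` is a left `D`-module: `F` and `S` are the commuting semilinear actions
    -- of `φ` and `ρ` on `M`
    (F S : M →+ M)
    (hF : ∀ (x : K) (m : M), F (x • m) = γφ x • F m)
    (hS : ∀ (x : K) (m : M), S (x • m) = γρ x • S m)
    (hFS : ∀ m : M, F (S m) = S (F m))
    -- `M` is free of rank `d` as `K⟨φ⟩`-module with basis `κ̄_1, …, κ̄_d`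
    (κb : Fin d → M)
    (hli : LinearIndependent K fun p : Fin d × ℕ => F^[p.2] (κb p.1))
    (hsp : Submodule.span K (Set.range fun p : Fin d × ℕ => F^[p.2] (κb p.1)) = ⊤)
    -- the `ρ`-action on the basis is given by the matrix `D ∈ Mat_{d×d}(K⟨φ⟩)`
    (Dmat : Fin d → Fin d → (ℕ →₀ K))
    (hact : ∀ i, S (κb i) = ∑ j : Fin d, (Dmat i j).sum fun k x => x • F^[k] (κb j))
    -- `J` is a Janet basis of `⟨p_1, …, p_d⟩`
    (J : JanetBasis γφ γρ d (DSpan γφ γρ (Set.range (pelt Dmat))))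
    -- `J` is the Janet decomposition of an auto-reduced set `G` generating the
    -- same submodule as `p_1, …, p_d`
    {s : ℕ} (G : Fin s → Fr K d) (lmg : Fin s → MonIx d)
    (hGspan : DSpan γφ γρ (Set.range G) = DSpan γφ γρ (Set.range (pelt Dmat)))
    (hJD : IsJanetDecompOf γφ γρ J G lmg)
    -- `n_i < ∞` for all `i`
    (hfin : ∀ i : Fin d, nVal γφ γρ J i < ⊤)
    -- `(b_i, μ_i) ∈ J` is the pair with `lm(b_i) = φ^{n_i} κ_i`, indexed by `bi i`
    (bi : Fin d → Fin J.r)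
    (hbi : ∀ i : Fin d, ∃ n : ℕ, (n : ℕ∞) = nVal γφ γρ J i ∧ J.lmb (bi i) = (i, n, 0))
    :
    (∀ i : Fin d, J.μ (bi i) = (true, true)) ∧
    (∀ (i : Fin d) (j : ℕ), mVal γφ γρ J i ≤ (j : ℕ∞) → (j : ℕ∞) < nVal γφ γρ J i →
      (∃! q : ℕ × Fin J.r,
          0 < q.1 ∧ q.2 ∉ Set.range bi ∧ J.lmb q.2 = (i, j, q.1)) ∧
      (∀ (l : ℕ) (ix : Fin J.r), ix ∉ Set.range bi → J.lmb ix = (i, j, l) →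
          J.μ ix = (false, true))) ∧
    (∀ ix : Fin J.r, ix ∉ Set.range bi →
      ∃ (i : Fin d) (j l : ℕ), 0 < l ∧ mVal γφ γρ J i ≤ (j : ℕ∞) ∧
        (j : ℕ∞) < nVal γφ γρ J i ∧ J.lmb ix = (i, j, l)) := by
  classical
  obtain ⟨hAR, hdesc, hpairs⟩ := hJD
  have hGlm : ∀ a, IsLm (G a) (lmg a) := fun a => (hAR.1 a).2
  -- decomposition membership for each index of J
  have pairmem : ∀ ix : Fin J.r,
      (∃ a, IsFirst lmg a ∧ (J.b ix, J.μ ix) = (G a, (true, true))) ∨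
      (∃ (a a' : Fin s) (k : ℕ), ¬ IsFirst lmg a ∧ (a' : ℕ) + 1 = (a : ℕ) ∧
        k + (lmg a).2.1 < (lmg a').2.1 ∧
        (J.b ix, J.μ ix) = ((PhiMul γφ)^[k] (G a), (false, true))) := by
    intro ix
    have h : (J.b ix, J.μ ix) ∈ JanetDecompPairs γφ G lmg := by
      rw [← hpairs]; exact ⟨ix, rfl⟩
    simpa [JanetDecompPairs, Set.mem_union, Set.mem_setOf_eq] using h
  -- class monotonicity
  have classMono : ∀ a b : Fin s, a ≤ b → (lmg a).1 ≤ (lmg b).1 := by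
    intro a b h
    rcases eq_or_lt_of_le h with rfl | h
    · exact le_refl _
    · rcases hdesc a b h with h' | ⟨e, _⟩
      · exact h'.le
      · exact le_of_eq e.symm
  -- uniqueness of first elements per class
  have firstUnique : ∀ a b : Fin s, IsFirst lmg a → IsFirst lmg b →
      (lmg a).1 = (lmg b).1 → a = b := by
    intro a b ha hb he
    rcases lt_trichotomy a b with h | h | h
    · exact absurd he (hb a h)
    · exact h
    · exact absurd he.symm (ha b h)
  -- φ-degree bound by the first element of a class with ρ-degree-0 lm
  have degLe : ∀ (a1 a' : Fin s) (i : Fin d) (n : ℕ), IsFirst lmg a1 →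
      lmg a1 = (i, n, 0) → (lmg a').1 = i → (lmg a').2.1 ≤ n := by
    intro a1 a' i n hf h1 hcls
    rcases lt_trichotomy a1 a' with h | rfl | h
    · have hm := hdesc a1 a' h
      rw [h1] at hm
      rcases hm with h' | ⟨_, h2⟩
      · rw [hcls] at h'; exact absurd h' (lt_irrefl _)
      · rcases h2 with h3 | ⟨_, h3⟩
        · exact h3.le
        · exact absurd h3 (Nat.not_lt_zero _)
    · rw [h1]
    · exact absurd (hcls.trans (congrArg Prod.fst h1.symm)) (hf a' h)
  -- Part (1)
  have hmu : ∀ i : Fin d, J.μ (bi i) = (true, true) := by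
    intro i
    obtain ⟨n, hnv, hlmb⟩ := hbi i
    rcases pairmem (bi i) with ⟨a, hfirst, hq⟩ | ⟨a, a', k, hnf, haa, hklt, hq⟩
    · exact congrArg Prod.snd hq
    · exfalso
      have hb : J.b (bi i) = (PhiMul γφ)^[k] (G a) := congrArg Prod.fst hq
      have hlm2 : IsLm (J.b (bi i)) ((lmg a).1, (lmg a).2.1 + k, (lmg a).2.2) := by
        rw [hb]; exact IsLm_PhiMul_iter k (hGlm a)
      have he : ((i : Fin d), n, 0) = ((lmg a).1, (lmg a).2.1 + k, (lmg a).2.2) := by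
        rw [← hlmb]; exact IsLm_unique (J.b_lm (bi i)) hlm2
      simp only [Prod.mk.injEq] at he
      obtain ⟨hcls, hdeg, hrho⟩ := he
      -- produce the big monomial (i, T, 0)
      set T := (Finset.univ.sup fun ix : Fin J.r => (J.lmb ix).2.1) + 1 with hTdef
      have hnT : n < T := by
        have h' : (J.lmb (bi i)).2.1 ≤ Finset.univ.sup fun ix : Fin J.r => (J.lmb ix).2.1 :=
          Finset.le_sup (f := fun ix : Fin J.r => (J.lmb ix).2.1) (Finset.mem_univ (bi i))
        rw [hlmb] at h'
        rw [hTdef]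
        exact Nat.lt_succ_of_le h'
      have hfmem : (PhiMul γφ)^[T - n] (J.b (bi i)) ∈
          DSpan γφ γρ (Set.range (pelt Dmat)) := by
        have hmem0 : (PhiMul γφ)^[T - n] (J.b (bi i)) ∈ DSpan γφ γρ (Set.range J.b) :=
          Submodule.subset_span ⟨T - n, 0, J.b (bi i), ⟨bi i, rfl⟩, rfl⟩
        rwa [J.span_eq] at hmem0
      have h0 := J.b_lm (bi i)
      rw [hlmb] at h0
      have hflm := IsLm_PhiMul_iter (γφ := γφ) (T - n) h0
      rw [show n + (T - n) = T by omega] at hflm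
      obtain ⟨ixs, hc⟩ := J.lm_cover _ hfmem hflm.ne_zero _ hflm
      obtain ⟨x, y, hx, hy, heq⟩ := hc
      simp only [Prod.mk.injEq] at heq
      obtain ⟨hc1, hc2, hc3⟩ := heq
      have hxpos : 0 < x := by
        have h' : (J.lmb ixs).2.1 ≤ Finset.univ.sup fun ix : Fin J.r => (J.lmb ix).2.1 :=
          Finset.le_sup (f := fun ix : Fin J.r => (J.lmb ix).2.1) (Finset.mem_univ ixs)
        have h'' : (J.lmb ixs).2.1 < T := by
          rw [hTdef]; exact Nat.lt_succ_of_le h'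
        omega
      have hμ1 : (J.μ ixs).1 = true := by
        rcases hx with h | h
        · exact h
        · omega
      rcases pairmem ixs with ⟨a0, hfirst0, hq0⟩ | ⟨_, _, _, _, _, _, hq0⟩
      swap
      · have hsnd : J.μ ixs = (false, true) := congrArg Prod.snd hq0
        rw [hsnd] at hμ1; simp at hμ1
      have hb0 : J.b ixs = G a0 := congrArg Prod.fst hq0
      have hlm0 : J.lmb ixs = lmg a0 :=
        IsLm_unique (J.b_lm ixs) (by rw [hb0]; exact hGlm a0)
      have hnle : nVal γφ γρ J i ≤ ((J.lmb ixs).2.1 : ℕ∞) :=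
        nVal_le J (triple_eq hc1.symm rfl (by omega))
      rw [← hnv] at hnle
      have hcge : n ≤ (J.lmb ixs).2.1 := by exact_mod_cast hnle
      have hane : a ≠ a0 := fun h => hnf (h ▸ hfirst0)
      apply hAR.2.2 a0 (lmg a0) (hGlm a0).1 a hane
      exact ⟨(J.lmb ixs).2.1 - (lmg a).2.1, 0, Or.inl rfl, Or.inl rfl, by
        rw [← hlm0]; exact triple_eq (hc1.symm.trans hcls) (by omega) (by omega)⟩
  -- first-element data for each bi i
  have hfirstData : ∀ i : Fin d, ∃ a1, IsFirst lmg a1 ∧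
      (J.b (bi i), J.μ (bi i)) = (G a1, (true, true)) := by
    intro i
    rcases pairmem (bi i) with ⟨a, hf, hq⟩ | ⟨a, a', k, _, _, _, hq⟩
    · exact ⟨a, hf, hq⟩
    · exfalso
      have hsnd : J.μ (bi i) = (false, true) := congrArg Prod.snd hq
      rw [hmu i] at hsnd
      simp at hsnd
  -- any index outside the range of bi comes from the second kind of pairs
  have hft : ∀ ix : Fin J.r, ix ∉ Set.range bi →
      ∃ (a a' : Fin s) (k : ℕ), ¬ IsFirst lmg a ∧ (a' : ℕ) + 1 = (a : ℕ) ∧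
        k + (lmg a).2.1 < (lmg a').2.1 ∧
        J.b ix = (PhiMul γφ)^[k] (G a) ∧ J.μ ix = (false, true) := by
    intro ix hnr
    rcases pairmem ix with ⟨a0, hf0, hq⟩ | ⟨a, a', k, h1, h2, h3, hq⟩
    · exfalso
      have hb0 : J.b ix = G a0 := congrArg Prod.fst hq
      have hlm0 : J.lmb ix = lmg a0 :=
        IsLm_unique (J.b_lm ix) (by rw [hb0]; exact hGlm a0)
      obtain ⟨a1, hf1, hq1⟩ := hfirstData (lmg a0).1
      have hb1 : J.b (bi (lmg a0).1) = G a1 := congrArg Prod.fst hq1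
      have hlm1 : J.lmb (bi (lmg a0).1) = lmg a1 :=
        IsLm_unique (J.b_lm _) (by rw [hb1]; exact hGlm a1)
      obtain ⟨n0, _, hlmb0⟩ := hbi (lmg a0).1
      have hcls1 : (lmg a1).1 = (lmg a0).1 := by
        rw [← hlm1, hlmb0]
      have hae : a0 = a1 := firstUnique a0 a1 hf0 hf1 hcls1.symm
      apply hnr
      refine ⟨(lmg a0).1, (J.pair_inj ?_).symm⟩
      show (J.b ix, J.μ ix) = (J.b (bi (lmg a0).1), J.μ (bi (lmg a0).1))
      rw [hq, hq1, hae]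
    · exact ⟨a, a', k, h1, h2, h3, congrArg Prod.fst hq, congrArg Prod.snd hq⟩
  -- core of part (3)
  have h3core : ∀ ix : Fin J.r, ix ∉ Set.range bi →
      ∃ (i : Fin d) (j l : ℕ), 0 < l ∧ mVal γφ γρ J i ≤ (j : ℕ∞) ∧
        (j : ℕ∞) < nVal γφ γρ J i ∧ J.lmb ix = (i, j, l) := by
    intro ix hnr
    obtain ⟨a, a', k, hnf, haa, hklt, hbeq, hμeq⟩ := hft ix hnr
    have hlm : J.lmb ix = ((lmg a).1, (lmg a).2.1 + k, (lmg a).2.2) :=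
      IsLm_unique (J.b_lm ix) (by rw [hbeq]; exact IsLm_PhiMul_iter k (hGlm a))
    unfold IsFirst at hnf
    push_neg at hnf
    obtain ⟨a₂, ha₂, hcls₂⟩ := hnf
    have ha'lt : a' < a := by
      rw [Fin.lt_def]; omega
    have ha₂le : a₂ ≤ a' := by
      rw [Fin.le_def]
      have := Fin.lt_def.mp ha₂
      omega
    have hclsa' : (lmg a').1 = (lmg a).1 := by
      have h1 := classMono a₂ a' ha₂le
      have h2 := classMono a' a ha'lt.le
      rw [hcls₂] at h1
      exact le_antisymm h2 h1
    obtain ⟨n, hnv, hlmb⟩ := hbi (lmg a).1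
    obtain ⟨a1, hf1, hq1⟩ := hfirstData (lmg a).1
    have hb1 : J.b (bi (lmg a).1) = G a1 := congrArg Prod.fst hq1
    have hlmu : J.lmb (bi (lmg a).1) = lmg a1 :=
      IsLm_unique (J.b_lm (bi (lmg a).1)) (by rw [hb1]; exact hGlm a1)
    have hlm1 : lmg a1 = ((lmg a).1, n, 0) := by rw [← hlmu, hlmb]
    have hdegle : (lmg a').2.1 ≤ n := degLe a1 a' (lmg a).1 n hf1 hlm1 hclsa'
    have hjlt : (lmg a).2.1 + k < n := by omega
    have hlpos : 0 < (lmg a).2.2 := by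
      by_contra h
      push_neg at h
      have h0 : (lmg a).2.2 = 0 := by omega
      have hle : nVal γφ γρ J (lmg a).1 ≤ (((lmg a).2.1 + k : ℕ) : ℕ∞) :=
        nVal_le J (by rw [hlm]; exact triple_eq rfl rfl h0)
      rw [← hnv] at hle
      have : n ≤ (lmg a).2.1 + k := by exact_mod_cast hle
      omega
    refine ⟨(lmg a).1, (lmg a).2.1 + k, (lmg a).2.2, hlpos, ?_, ?_, hlm⟩
    · exact mVal_le J hlm
    · rw [← hnv]; exact_mod_cast hjlt
  refine ⟨hmu, ?_, fun ix h => h3core ix h⟩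
  -- Part (2)
  intro i j hm hn
  obtain ⟨n, hnv, hlmb⟩ := hbi i
  have hjn : j < n := by
    rw [← hnv] at hn; exact_mod_cast hn
  -- minimal φ-degree pair in class i
  have hminex : ∃ (m0 : ℕ) (ix₁ : Fin J.r) (l0 : ℕ),
      m0 ≤ j ∧ J.lmb ix₁ = (i, m0, l0) := by
    have hne : {n' : ℕ | ∃ ix l, J.lmb ix = (i, n', l)}.Nonempty := ⟨n, bi i, 0, hlmb⟩
    obtain ⟨ix₁, l0, h1⟩ := Nat.sInf_mem hne
    refine ⟨_, ix₁, l0, ?_, h1⟩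
    have hle : (↑(sInf {n' : ℕ | ∃ ix l, J.lmb ix = (i, n', l)}) : ℕ∞) ≤
        mVal γφ γρ J i := by
      unfold mVal
      apply le_sInf
      rintro c ⟨n', rfl, ix', l', h'⟩
      have hmem : n' ∈ {n'' : ℕ | ∃ ix l, J.lmb ix = (i, n'', l)} := ⟨ix', l', h'⟩
      exact_mod_cast Nat.sInf_le hmem
    have := hle.trans hm
    exact_mod_cast this
  obtain ⟨m0, ix₁, l0, hm0j, hix₁⟩ := hminex
  set L := (Finset.univ.sup fun ix : Fin J.r => (J.lmb ix).2.2) + 1 with hLdef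
  have hl0L : l0 < L := by
    have h' : (J.lmb ix₁).2.2 ≤ Finset.univ.sup fun ix : Fin J.r => (J.lmb ix).2.2 :=
      Finset.le_sup (f := fun ix : Fin J.r => (J.lmb ix).2.2) (Finset.mem_univ ix₁)
    rw [hix₁] at h'
    rw [hLdef]
    exact Nat.lt_succ_of_le h'
  have hfmem : (PhiMul γφ)^[j - m0] ((RhoMul γρ)^[L - l0] (J.b ix₁)) ∈
      DSpan γφ γρ (Set.range (pelt Dmat)) := by
    have hmem0 : (PhiMul γφ)^[j - m0] ((RhoMul γρ)^[L - l0] (J.b ix₁)) ∈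
        DSpan γφ γρ (Set.range J.b) :=
      Submodule.subset_span ⟨j - m0, L - l0, J.b ix₁, ⟨ix₁, rfl⟩, rfl⟩
    rwa [J.span_eq] at hmem0
  have h0 := J.b_lm ix₁
  rw [hix₁] at h0
  have hflm := IsLm_iterPR (γφ := γφ) (γρ := γρ) (j - m0) (L - l0) h0
  rw [show m0 + (j - m0) = j by omega, show l0 + (L - l0) = L by omega] at hflm
  obtain ⟨ix, hc⟩ := J.lm_cover _ hfmem hflm.ne_zero _ hflm
  obtain ⟨x, y, hx, hy, heq⟩ := hc
  simp only [Prod.mk.injEq] at heq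
  obtain ⟨hc1, hc2, hc3⟩ := heq
  have hnotbi : ix ∉ Set.range bi := by
    rintro ⟨i', rfl⟩
    obtain ⟨n', hn', hlmb'⟩ := hbi i'
    have hii : i = i' := by rw [hlmb'] at hc1; exact hc1
    subst hii
    have hnn : n = n' := by
      have := hnv.trans hn'.symm
      exact_mod_cast this
    rw [hlmb'] at hc2
    simp at hc2
    omega
  have hμft : J.μ ix = (false, true) := (hft ix hnotbi).choose_spec.choose_spec.choose_spec.2.2.2.2
  have hx0 : x = 0 := by
    rcases hx with h | h
    · rw [hμft] at h; simp at h
    · exact h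
  have hlmbix : J.lmb ix = (i, j, (J.lmb ix).2.2) := triple_eq hc1.symm (by omega) rfl
  have hlpos : 0 < (J.lmb ix).2.2 := by
    by_contra h
    push_neg at h
    have h0 : (J.lmb ix).2.2 = 0 := by omega
    have hle : nVal γφ γρ J i ≤ (j : ℕ∞) :=
      nVal_le J (by rw [hlmbix, h0])
    exact absurd (lt_of_lt_of_le hn hle) (lt_irrefl _)
  constructor
  · refine ⟨((J.lmb ix).2.2, ix), ⟨hlpos, hnotbi, hlmbix⟩, ?_⟩
    rintro ⟨l', ix'⟩ ⟨hl', hnr', hlm'⟩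
    have hμft' : J.μ ix' = (false, true) :=
      (hft ix' hnr').choose_spec.choose_spec.choose_spec.2.2.2.2
    have hp1 : (J.lmb ix').1 = i := by rw [hlm']
    have hp2 : (J.lmb ix').2.1 = j := by rw [hlm']
    have hp3 : (J.lmb ix').2.2 = l' := by rw [hlm']
    have hq1' : (J.lmb ix).1 = i := by rw [hlmbix]
    have hq2' : (J.lmb ix).2.1 = j := by rw [hlmbix]
    have hme1 : (i, j, (J.lmb ix).2.2 + l') ∈ Cone (J.μ ix') (J.lmb ix') := by
      refine ⟨0, (J.lmb ix).2.2, Or.inr rfl, Or.inl (by rw [hμft']), ?_⟩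
      rw [hp1, hp2, hp3, Nat.add_zero, Nat.add_comm l' (J.lmb ix).2.2]
    have hme2 : (i, j, (J.lmb ix).2.2 + l') ∈ Cone (J.μ ix) (J.lmb ix) := by
      refine ⟨0, l', Or.inr rfl, Or.inl (by rw [hμft]), ?_⟩
      rw [hq1', hq2', Nat.add_zero]
    have hixe : ix' = ix := J.disj ix' ix _ hme1 hme2
    rw [hixe] at hlm'
    have hl'eq : l' = (J.lmb ix).2.2 := by
      have h := hlm'.symm.trans hlmbix
      simpa using h
    rw [hl'eq, hixe]
  · intro l' ix' hnr' _
    exact (hft ix' hnr').choose_spec.choose_spec.choose_spec.2.2.2.2
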